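/- arXiv:2007.10218 — 3 statements merged into one kernel-verified Lean document; each statement's English description precedes it below -/
import Mathlib

section
/- For every ρ > 0 one has g(ρ) := 1 + cosh²(ρ) - sinh²(ρ)/ρ² - cosh(ρ) sinh(ρ)/ρ ≥ 0; equivalently, 1/sinh²(ρ) + coth²(ρ) - 1/ρ² - coth(ρ)/ρ ≥ 0 for every ρ > 0. -/
/-!
Write `s = sinh ρ`, `c = cosh ρ` and `t = s / ρ`. The first inequality reads `t² + c t ≤ 1 + c²`.
Integrating `0 ≤ x sinh x` three times from `0` gives `3 sinh x ≤ x (cosh x + 2)`, i.e.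
`t ≤ (c + 2) / 3`, and at `t = (c + 2) / 3` the quadratic `t² + c t` equals
`1 + c² - 5 (c - 1)² / 9`. The second inequality is the first divided by `s²`.
-/

open Real Set

lemma le_of_hasDerivAt_nonneg_of_nonneg {f f' : ℝ → ℝ} (hf : ∀ y, HasDerivAt f (f' y) y)
    (hf' : ∀ y, 0 ≤ y → 0 ≤ f' y) {x : ℝ} (hx : 0 ≤ x) : f 0 ≤ f x := by
  have hmono : MonotoneOn f (Ici 0) :=
    monotoneOn_of_hasDerivWithinAt_nonneg (convex_Ici 0)
      (fun y _ => (hf y).continuousAt.continuousWithinAt)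
      (fun y _ => (hf y).hasDerivWithinAt)
      (fun y hy => hf' y (by rw [interior_Ici] at hy; exact le_of_lt hy))
  exact hmono self_mem_Ici hx hx

namespace Real

lemma sinh_le_mul_cosh {x : ℝ} (hx : 0 ≤ x) : sinh x ≤ x * cosh x := by
  have h := le_of_hasDerivAt_nonneg_of_nonneg (f := fun y => y * cosh y - sinh y)
    (fun y => (((hasDerivAt_id y).mul (hasDerivAt_cosh y)).sub (hasDerivAt_sinh y)).congr_deriv
      (show 1 * cosh y + y * sinh y - cosh y = y * sinh y by ring))
    (fun y hy => mul_nonneg hy (sinh_nonneg_iff.2 hy)) hx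
  simpa using h

lemma two_mul_cosh_le {x : ℝ} (hx : 0 ≤ x) : 2 * cosh x ≤ 2 + x * sinh x := by
  have h := le_of_hasDerivAt_nonneg_of_nonneg (f := fun y => 2 + y * sinh y - 2 * cosh y)
    (fun y => (((hasDerivAt_id y).mul (hasDerivAt_sinh y)).const_add 2 |>.sub
      ((hasDerivAt_cosh y).const_mul 2)).congr_deriv
      (show 1 * sinh y + y * cosh y - 2 * sinh y = y * cosh y - sinh y by ring))
    (fun y hy => sub_nonneg.2 (sinh_le_mul_cosh hy)) hx
  simpa using h

lemma three_mul_sinh_le {x : ℝ} (hx : 0 ≤ x) : 3 * sinh x ≤ x * (cosh x + 2) := by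
  have h := le_of_hasDerivAt_nonneg_of_nonneg (f := fun y => y * (cosh y + 2) - 3 * sinh y)
    (fun y => (((hasDerivAt_id y).mul ((hasDerivAt_cosh y).add_const 2)).sub
      ((hasDerivAt_sinh y).const_mul 3)).congr_deriv
      (show 1 * (cosh y + 2) + y * sinh y - 3 * cosh y = 2 + y * sinh y - 2 * cosh y by ring))
    (fun y hy => sub_nonneg.2 (two_mul_cosh_le hy)) hx
  simpa using h

end Real

lemma sq_add_mul_le_one_add_sq {c t : ℝ} (ht : 0 ≤ t) (htc : t ≤ (c + 2) / 3) (hc : 0 ≤ c) :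
    t ^ 2 + c * t ≤ 1 + c ^ 2 :=
  calc t ^ 2 + c * t ≤ ((c + 2) / 3) ^ 2 + c * ((c + 2) / 3) := by gcongr
    _ = 1 + c ^ 2 - 5 * (c - 1) ^ 2 / 9 := by ring
    _ ≤ 1 + c ^ 2 := by nlinarith [sq_nonneg (c - 1)]

theorem stmt_4 :
    (∀ ρ : ℝ, 0 < ρ →
      0 ≤ 1 + (Real.cosh ρ) ^ 2 - (Real.sinh ρ) ^ 2 / ρ ^ 2 -
        Real.cosh ρ * Real.sinh ρ / ρ) ∧
    (∀ ρ : ℝ, 0 < ρ →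
      0 ≤ 1 / (Real.sinh ρ) ^ 2 + (Real.cosh ρ / Real.sinh ρ) ^ 2 - 1 / ρ ^ 2 -
        (Real.cosh ρ / Real.sinh ρ) / ρ) := by
  have first : ∀ ρ : ℝ, 0 < ρ →
      0 ≤ 1 + cosh ρ ^ 2 - sinh ρ ^ 2 / ρ ^ 2 - cosh ρ * sinh ρ / ρ := by
    intro ρ hρ
    have hbound : sinh ρ / ρ ≤ (cosh ρ + 2) / 3 := by
      rw [div_le_div_iff₀ hρ (by norm_num)]
      linarith [three_mul_sinh_le hρ.le]
    have hquad := sq_add_mul_le_one_add_sq (div_nonneg (sinh_nonneg_iff.2 hρ.le) hρ.le) hbound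
      (cosh_pos ρ).le
    rw [div_pow, ← mul_div_assoc] at hquad
    linarith
  refine ⟨first, fun ρ hρ => ?_⟩
  have hs : sinh ρ ≠ 0 := (sinh_pos_iff.2 hρ).ne'
  have heq : 1 / sinh ρ ^ 2 + (cosh ρ / sinh ρ) ^ 2 - 1 / ρ ^ 2 - cosh ρ / sinh ρ / ρ
      = (1 + cosh ρ ^ 2 - sinh ρ ^ 2 / ρ ^ 2 - cosh ρ * sinh ρ / ρ) / sinh ρ ^ 2 := by
    field_simp
  rw [heq]
  exact div_nonneg (first ρ hρ) (sq_nonneg _)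
end

section
/- For every ρ > 0, the series ∑_{l=1}^{∞} (8l² + 4l - 12) · 4^{l-1}/(2l+2)! · ρ^{2l} converges and its sum equals g(ρ) := 1 + cosh²(ρ) - sinh²(ρ)/ρ² - cosh(ρ) sinh(ρ)/ρ. -/
open Real Nat

/-! By the double-angle formulas, for `ρ ≠ 0`
`g(ρ) = (cosh 2ρ - 1)/2 - (cosh 2ρ - 1 - 2ρ²)/(2ρ²) - (sinh 2ρ - 2ρ)/(2ρ)`,
and each of the three numerators is a tail of the Taylor series of `cosh` or `sinh` at `2ρ`.
Putting the `l`-th terms over the common denominator `(2l+2)!` gives the coefficient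
`(8l² + 4l - 12) 4^(l-1)`. -/

lemma Real.hasSum_cosh_sub_one (x : ℝ) :
    HasSum (fun n : ℕ => x ^ (2 * (n + 1)) / (2 * (n + 1))!) (cosh x - 1) := by
  simpa using (hasSum_nat_add_iff' 1).mpr (hasSum_cosh x)

lemma Real.hasSum_cosh_sub_one_sub_sq_div_two (x : ℝ) :
    HasSum (fun n : ℕ => x ^ (2 * (n + 2)) / (2 * (n + 2))!) (cosh x - 1 - x ^ 2 / 2) := by
  have h := (hasSum_nat_add_iff' 2).mpr (hasSum_cosh x)
  norm_num [Finset.sum_range_succ] at h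
  rwa [← sub_sub] at h

lemma Real.hasSum_sinh_sub_self (x : ℝ) :
    HasSum (fun n : ℕ => x ^ (2 * (n + 1) + 1) / (2 * (n + 1) + 1)!) (sinh x - x) := by
  simpa using (hasSum_nat_add_iff' 1).mpr (hasSum_sinh x)

lemma term_eq_cosh_sinh_tail_combination {ρ : ℝ} (hρ : ρ ≠ 0) (n : ℕ) :
    (8 * ((n : ℝ) + 1) ^ 2 + 4 * ((n : ℝ) + 1) - 12) * 4 ^ n /
        (2 * (n + 1) + 2)! * ρ ^ (2 * (n + 1)) =
      (2 * ρ) ^ (2 * (n + 1)) / (2 * (n + 1))! / 2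
        - (2 * ρ) ^ (2 * (n + 2)) / (2 * (n + 2))! / (2 * ρ ^ 2)
        - (2 * ρ) ^ (2 * (n + 1) + 1) / (2 * (n + 1) + 1)! / (2 * ρ) := by
  have h4 : (2 * ρ) ^ (2 * (n + 1)) = 4 ^ (n + 1) * ρ ^ (2 * (n + 1)) := by
    rw [mul_pow, pow_mul]; norm_num
  rw [show 2 * (n + 2) = 2 * (n + 1) + 1 + 1 by ring, factorial_succ (2 * (n + 1) + 1),
    factorial_succ (2 * (n + 1)), pow_succ (2 * ρ), pow_succ (2 * ρ), h4]
  push_cast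
  field_simp
  ring

lemma cosh_sinh_tail_combination_eq {ρ : ℝ} (hρ : ρ ≠ 0) :
    (cosh (2 * ρ) - 1) / 2 - (cosh (2 * ρ) - 1 - (2 * ρ) ^ 2 / 2) / (2 * ρ ^ 2)
        - (sinh (2 * ρ) - 2 * ρ) / (2 * ρ) =
      1 + cosh ρ ^ 2 - sinh ρ ^ 2 / ρ ^ 2 - cosh ρ * sinh ρ / ρ := by
  rw [cosh_two_mul, sinh_two_mul, cosh_sq]
  field_simp
  ring

theorem stmt_5 (ρ : ℝ) (hρ : 0 < ρ) :
    HasSum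
      (fun n : ℕ =>
        (8 * ((n : ℝ) + 1) ^ 2 + 4 * ((n : ℝ) + 1) - 12) * 4 ^ n /
          (Nat.factorial (2 * (n + 1) + 2)) * ρ ^ (2 * (n + 1)))
      (1 + (Real.cosh ρ) ^ 2 - (Real.sinh ρ) ^ 2 / ρ ^ 2 -
        Real.cosh ρ * Real.sinh ρ / ρ) := by
  rw [funext (term_eq_cosh_sinh_tail_combination hρ.ne'), ← cosh_sinh_tail_combination_eq hρ.ne']
  exact (((hasSum_cosh_sub_one _).div_const 2).sub
    ((hasSum_cosh_sub_one_sub_sq_div_two _).div_const _)).sub ((hasSum_sinh_sub_self _).div_const _)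
end

section
/- For every t > 0 and every ρ > 0, ∂²_ρ log K₃(t,ρ) - coth(ρ) ∂_ρ log K₃(t,ρ) > 0, where K₃(t,ρ) = (4πt)^{-3/2} (ρ/sinh ρ) e^{-t - ρ²/(4t)} and ∂_ρ, ∂²_ρ denote the first and second ordinary derivatives in ρ. -/
/-!
Up to a constant, `log K₃ t ρ = log ρ - log (sinh ρ) - ρ² / (4t)`, and with `s = sinh ρ`,
`c = cosh ρ` the quantity in question equals
`(ρ² (2 + s²) - s² - ρ s c) / (ρ² s²) + (ρ c - s) / (2 t s)`.
The second numerator is positive because `tanh ρ < ρ`. After doubling the angle, the first one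
becomes `(3 + cosh y) y² + 4 - 4 cosh y - 2 y sinh y` with `y = 2ρ`, which is positive since
its first three derivatives vanish at `0` and its third derivative is
`y² sinh y + 4 (y cosh y - sinh y) > 0`.
-/

open Real

/-- The heat kernel of 3-dimensional hyperbolic space. -/
noncomputable def K₃ (t ρ : ℝ) : ℝ :=
  (4 * π * t) ^ (-(3 : ℝ) / 2) * (ρ / Real.sinh ρ) * Real.exp (-t - ρ ^ 2 / (4 * t))

theorem pos_of_hasDerivAt_of_pos {f f' : ℝ → ℝ} (hf : ∀ x, HasDerivAt f (f' x) x)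
    (h0 : f 0 = 0) (hf' : ∀ x, 0 < x → 0 < f' x) : ∀ x, 0 < x → 0 < f x := by
  intro x hx
  have hmono : StrictMonoOn f (Set.Ici 0) := by
    refine strictMonoOn_of_deriv_pos (convex_Ici 0)
      (fun y _ ↦ (hf y).continuousAt.continuousWithinAt) fun y hy ↦ ?_
    rw [interior_Ici] at hy
    exact (hf y).deriv ▸ hf' y hy
  simpa [h0] using hmono Set.self_mem_Ici hx.le hx

namespace Real

theorem sinh_lt_mul_cosh {x : ℝ} (hx : 0 < x) : sinh x < x * cosh x := by
  have key := pos_of_hasDerivAt_of_pos (f := fun x ↦ x * cosh x - sinh x)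
    (fun y ↦ ((hasDerivAt_id y).mul (hasDerivAt_cosh y)).sub (hasDerivAt_sinh y) |>.congr_deriv
      (by simp))
    (by simp) (fun y hy ↦ mul_pos hy (sinh_pos_iff.2 hy)) x hx
  simpa using key

theorem four_mul_cosh_add_two_mul_mul_sinh_lt {y : ℝ} (hy : 0 < y) :
    4 * cosh y + 2 * y * sinh y < (3 + cosh y) * y ^ 2 + 4 := by
  have h3 : ∀ z, 0 < z → 0 < z ^ 2 * sinh z + 4 * (z * cosh z - sinh z) := fun z hz ↦ by
    have := sinh_lt_mul_cosh hz
    have := sinh_pos_iff.2 hz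
    positivity
  have h2 := pos_of_hasDerivAt_of_pos
    (f := fun z ↦ 2 * z * sinh z + z ^ 2 * cosh z + 6 - 6 * cosh z) (fun z ↦ by
      refine (((((hasDerivAt_id z).const_mul 2).mul (hasDerivAt_sinh z)).add
        ((hasDerivAt_pow 2 z).mul (hasDerivAt_cosh z))).add_const 6).sub
        ((hasDerivAt_cosh z).const_mul 6) |>.congr_deriv ?_
      simp; ring) (by simp) h3
  have h1 := pos_of_hasDerivAt_of_pos
    (f := fun z ↦ z ^ 2 * sinh z + 6 * z - 6 * sinh z) (fun z ↦ by
      refine (((hasDerivAt_pow 2 z).mul (hasDerivAt_sinh z)).add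
        ((hasDerivAt_id z).const_mul 6)).sub ((hasDerivAt_sinh z).const_mul 6) |>.congr_deriv ?_
      simp) (by simp) h2
  have h0 := pos_of_hasDerivAt_of_pos
    (f := fun z ↦ (3 + cosh z) * z ^ 2 + 4 - 4 * cosh z - 2 * z * sinh z) (fun z ↦ by
      refine (((((hasDerivAt_cosh z).const_add 3).mul (hasDerivAt_pow 2 z)).add_const 4).sub
        ((hasDerivAt_cosh z).const_mul 4)).sub
        (((hasDerivAt_id z).const_mul 2).mul (hasDerivAt_sinh z)) |>.congr_deriv ?_
      simp; ring) (by simp) h1 y hy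
  linarith

theorem sinh_sq_add_mul_sinh_mul_cosh_lt {x : ℝ} (hx : 0 < x) :
    sinh x ^ 2 + x * sinh x * cosh x < x ^ 2 * (2 + sinh x ^ 2) := by
  have h := four_mul_cosh_add_two_mul_mul_sinh_lt (by positivity : 0 < 2 * x)
  rw [cosh_two_mul, sinh_two_mul, cosh_sq] at h
  nlinarith

end Real

section HeatKernel

variable {t : ℝ}

theorem log_K₃ (ht : 0 < t) {r : ℝ} (hr : 0 < r) :
    log (K₃ t r) =
      log ((4 * π * t) ^ (-(3 : ℝ) / 2)) + log r - log (sinh r) - t - r ^ 2 / (4 * t) := by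
  have hs := sinh_pos_iff.2 hr
  rw [K₃, log_mul (by positivity) (exp_ne_zero _), log_mul (by positivity) (by positivity),
    log_exp, log_div hr.ne' hs.ne']
  ring

theorem hasDerivAt_log_K₃ (ht : 0 < t) {r : ℝ} (hr : 0 < r) :
    HasDerivAt (fun r ↦ log (K₃ t r)) (r⁻¹ - cosh r / sinh r - r / (2 * t)) r := by
  have hs := sinh_pos_iff.2 hr
  have H := (((((hasDerivAt_log hr.ne').const_add (log ((4 * π * t) ^ (-(3 : ℝ) / 2)))).sub
    ((hasDerivAt_sinh r).log hs.ne')).sub_const t).sub ((hasDerivAt_pow 2 r).div_const (4 * t)))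
  refine (H.congr_deriv ?_).congr_of_eventuallyEq ?_
  · field_simp
    ring
  · filter_upwards [eventually_gt_nhds hr] with r hr
    exact log_K₃ ht hr

theorem hasDerivAt_deriv_log_K₃ (ht : 0 < t) {r : ℝ} (hr : 0 < r) :
    HasDerivAt (deriv fun r ↦ log (K₃ t r)) (-(r ^ 2)⁻¹ + (sinh r ^ 2)⁻¹ - (2 * t)⁻¹) r := by
  have hs := sinh_pos_iff.2 hr
  have H := ((hasDerivAt_inv hr.ne').sub
      ((hasDerivAt_cosh r).div (hasDerivAt_sinh r) hs.ne')).sub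
      ((hasDerivAt_id r).div_const (2 * t))
  refine (H.congr_deriv ?_).congr_of_eventuallyEq ?_
  · field_simp
    linear_combination 2 * r ^ 2 * t * cosh_sq r
  · filter_upwards [eventually_gt_nhds hr] with r hr
    exact (hasDerivAt_log_K₃ ht hr).deriv

end HeatKernel

theorem stmt_6 (t : ℝ) (ht : 0 < t) (ρ : ℝ) (hρ : 0 < ρ) :
    0 < deriv (deriv (fun r => Real.log (K₃ t r))) ρ -
        (Real.cosh ρ / Real.sinh ρ) * deriv (fun r => Real.log (K₃ t r)) ρ := by
  rw [(hasDerivAt_deriv_log_K₃ ht hρ).deriv, (hasDerivAt_log_K₃ ht hρ).deriv]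
  have hs := sinh_pos_iff.2 hρ
  have key : -(ρ ^ 2)⁻¹ + (sinh ρ ^ 2)⁻¹ - (2 * t)⁻¹ -
      cosh ρ / sinh ρ * (ρ⁻¹ - cosh ρ / sinh ρ - ρ / (2 * t)) =
      (ρ ^ 2 * (2 + sinh ρ ^ 2) - (sinh ρ ^ 2 + ρ * sinh ρ * cosh ρ)) / (ρ ^ 2 * sinh ρ ^ 2) +
        (ρ * cosh ρ - sinh ρ) / (2 * t * sinh ρ) := by
    field_simp
    linear_combination 2 * ρ ^ 2 * t * cosh_sq ρ
  rw [key]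
  have h₁ := sub_pos.2 (sinh_sq_add_mul_sinh_mul_cosh_lt hρ)
  have h₂ := sub_pos.2 (sinh_lt_mul_cosh hρ)
  positivity
end
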